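/- Let G be a finite group with conjugacy classes C₁,…,Cₙ, ℓᵢ = |Cᵢ|, and structure constant matrices Mⱼ = (a_{klj}) of the center of the group algebra. Define p_{ij} = Tr(MᵢMⱼ). Then p_{ij} = ∑_{t=1}^n (1/ℓ_t)·ℓ_{i j t t'}, where ℓ_{ijtt'} = #{(a,b,c,d) ∈ Cᵢ×Cⱼ×C_t×C_{t'} : abcd = 1}. -/

import Mathlib

open scoped Classical

/-- `ellCount G x` is the number of tuples `(g₁,…,g_r)` with `g_j` in the conjugacy class of
`x j` and `g₁ ⋯ g_r = 1`. -/
noncomputable def ellCount (G : Type*) [Group G] {r : ℕ} (x : Fin r → G) : ℕ :=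
  Nat.card {g : Fin r → G // (∀ j, IsConj (x j) (g j)) ∧ (List.ofFn g).prod = 1}

/-- The class sum of the conjugacy class of `x` in the group algebra `ℚ[G]`. -/
noncomputable def classSum (G : Type*) [Group G] [Fintype G] (x : G) : MonoidAlgebra ℚ G :=
  ∑ g : G, if IsConj x g then MonoidAlgebra.single g (1 : ℚ) else 0

/-!
Tr(MᵢMⱼ) = ∑ₜ ∑ₘ a_{tmi} a_{mtj} is the sum over t of the coefficient of Ĉₜ in ĈₜĈⱼĈᵢ. The class
algebra is commutative, so this is the coefficient of xₜ in ĈᵢĈⱼĈₜ, the number of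
(a, b, c) ∈ Cᵢ × Cⱼ × Cₜ with abc = xₜ. As ĈᵢĈⱼĈₜ is central, the same number counts the solutions
of abc = y for every y ∈ Cₜ; summing over y ∈ Cₜ counts the triples with abc ∈ Cₜ, and these are
exactly the quadruples (a, b, c, (abc)⁻¹) counted by ℓ_{ijtt'}.
-/

open MonoidAlgebra Finset

lemma isConj_inv_inv_iff {G : Type*} [Group G] {a b : G} : IsConj a⁻¹ b⁻¹ ↔ IsConj a b := by
  have inv_of_isConj : ∀ {a b : G}, IsConj a b → IsConj a⁻¹ b⁻¹ := fun h => by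
    obtain ⟨c, rfl⟩ := isConj_iff.1 h
    exact isConj_iff.2 ⟨c, conj_inv.symm⟩
  exact ⟨fun h => by simpa using inv_of_isConj h, inv_of_isConj⟩

lemma prod_ofFn_fin_four {G : Type*} [Monoid G] (g : Fin 4 → G) :
    (List.ofFn g).prod = g 0 * g 1 * g 2 * g 3 := by
  simp [List.ofFn_succ, mul_assoc]

lemma coeff_eq_of_isConj {k G : Type*} [Semiring k] [Group G] {F : MonoidAlgebra k G}
    (hF : ∀ h : G, Commute (single h 1) F) {g g' : G} (hg : IsConj g g') :
    F.coeff g' = F.coeff g := by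
  obtain ⟨h, rfl⟩ := isConj_iff.1 hg
  simpa using (congrArg (fun f => f.coeff (h * g)) (hF h).eq).symm

lemma coeff_sum_single_one {k G ι : Type*} [Semiring k] [Monoid G] (s : Finset ι) (f : ι → G)
    (g : G) : (∑ i ∈ s, single (f i) (1 : k)).coeff g = #{i ∈ s | f i = g} := by
  simp [coeff_sum, coeff_single, Finsupp.single_apply, sum_boole]

section ClassSums

variable {G : Type*} [Group G] [Fintype G]

noncomputable def conjFinset (x : G) : Finset G := {g | IsConj x g}

@[simp]
lemma mem_conjFinset {x g : G} : g ∈ conjFinset x ↔ IsConj x g := by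
  simp [conjFinset]

lemma classSum_eq_sum_single (x : G) : classSum G x = ∑ g ∈ conjFinset x, single g 1 := by
  rw [classSum, conjFinset, sum_filter]

lemma classSum_coeff (x g : G) : (classSum G x).coeff g = if IsConj x g then 1 else 0 := by
  rw [classSum_eq_sum_single, coeff_sum_single_one]
  split_ifs with h
  · rw [Nat.cast_eq_one, card_eq_one]
    refine ⟨g, ext fun y => ?_⟩
    simp only [mem_filter, mem_conjFinset, mem_singleton]
    exact ⟨And.right, fun hy => ⟨hy ▸ h, hy⟩⟩
  · rw [Nat.cast_eq_zero, card_eq_zero, filter_eq_empty_iff]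
    rintro y hy rfl
    exact h (mem_conjFinset.1 hy)

lemma commute_single_classSum (h x : G) : Commute (single h (1 : ℚ)) (classSum G x) := by
  simp only [Commute, SemiconjBy, classSum, mul_sum, sum_mul]
  refine Fintype.sum_equiv (MulAut.conj h).toEquiv _ _ fun g => ?_
  have hg : IsConj g (h * g * h⁻¹) := isConj_iff.2 ⟨h, rfl⟩
  have hc : IsConj x g ↔ IsConj x (h * g * h⁻¹) :=
    ⟨fun hx => hx.trans hg, fun hx => hx.trans hg.symm⟩
  by_cases hx : IsConj x g
  · simp [hx, hc.1 hx, single_mul_single, -isConj_iff]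
  · simp [hx, mt hc.2 hx, -isConj_iff]

lemma commute_classSum (x y : G) : Commute (classSum G x) (classSum G y) := by
  rw [classSum_eq_sum_single y]
  exact Commute.sum_right _ _ _ fun g _ => (commute_single_classSum g x).symm

lemma classSum_mul_mul_comm (u v w : G) :
    classSum G u * classSum G v * classSum G w = classSum G w * classSum G v * classSum G u := by
  rw [(commute_classSum u v).eq, ((commute_classSum v w).mul_left (commute_classSum u w)).eq,
    ← mul_assoc, (commute_classSum w v).eq]

lemma classSum_mul_mul (u v w : G) :
    classSum G u * classSum G v * classSum G w =
      ∑ q ∈ conjFinset u ×ˢ conjFinset v ×ˢ conjFinset w, single (q.1 * q.2.1 * q.2.2) 1 := by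
  rw [classSum_eq_sum_single, classSum_eq_sum_single, classSum_eq_sum_single, sum_mul_sum]
  simp_rw [sum_mul]
  simp_rw [mul_sum, sum_product, single_mul_single, mul_one]

lemma ellCount_eq_card_filter (u v w : G) :
    ellCount G ![u, v, w, w⁻¹] =
      #{q ∈ conjFinset u ×ˢ conjFinset v ×ˢ conjFinset w | IsConj w (q.1 * q.2.1 * q.2.2)} := by
  have last_eq {g : Fin 4 → G} (hg : (List.ofFn g).prod = 1) : g 3 = (g 0 * g 1 * g 2)⁻¹ :=
    eq_inv_of_mul_eq_one_right (by rwa [prod_ofFn_fin_four] at hg)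
  rw [ellCount, ← Nat.card_eq_finsetCard]
  refine Nat.card_congr
    { toFun := fun g => ⟨(g.1 0, g.1 1, g.1 2), ?_⟩
      invFun := fun q => ⟨![q.1.1, q.1.2.1, q.1.2.2, (q.1.1 * q.1.2.1 * q.1.2.2)⁻¹], ?_⟩
      left_inv := fun g => ?_
      right_inv := fun q => rfl }
  · obtain ⟨g, hconj, hprod⟩ := g
    have h3 := hconj 3
    simp only [Fin.isValue, Matrix.cons_val, last_eq hprod, isConj_inv_inv_iff] at h3
    exact mem_filter.2 ⟨mem_product.2 ⟨mem_conjFinset.2 (hconj 0),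
      mem_product.2 ⟨mem_conjFinset.2 (hconj 1), mem_conjFinset.2 (hconj 2)⟩⟩, h3⟩
  · obtain ⟨q, hq⟩ := q
    simp only [mem_filter, mem_product, mem_conjFinset] at hq
    refine ⟨fun j => ?_, by simp⟩
    fin_cases j
    · exact hq.1.1
    · exact hq.1.2.1
    · exact hq.1.2.2
    · simpa using isConj_inv_inv_iff.2 hq.2
  · ext j
    fin_cases j <;> simp [last_eq g.2.2]

lemma ellCount_eq_card_mul_coeff (u v w : G) :
    (ellCount G ![u, v, w, w⁻¹] : ℚ) =
      Nat.card {y : G // IsConj w y} * (classSum G u * classSum G v * classSum G w).coeff w := by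
  set T := conjFinset u ×ˢ conjFinset v ×ˢ conjFinset w
  have central (h : G) : Commute (single h 1) (classSum G u * classSum G v * classSum G w) :=
    ((commute_single_classSum h u).mul_right (commute_single_classSum h v)).mul_right
      (commute_single_classSum h w)
  have fiber_card {y : G} (hy : y ∈ conjFinset w) :
      (#{q ∈ {q ∈ T | IsConj w (q.1 * q.2.1 * q.2.2)} | q.1 * q.2.1 * q.2.2 = y} : ℚ) =
        (classSum G u * classSum G v * classSum G w).coeff w := by
    replace hy := mem_conjFinset.1 hy
    rw [← coeff_eq_of_isConj central hy, classSum_mul_mul, coeff_sum_single_one, filter_filter]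
    congr 2
    exact filter_congr fun q _ => and_iff_right_of_imp fun hq => hq ▸ hy
  rw [ellCount_eq_card_filter, card_eq_sum_card_fiberwise (f := fun q => q.1 * q.2.1 * q.2.2)
      (t := conjFinset w) fun q hq => by simpa using (mem_filter.1 hq).2,
    Nat.cast_sum, sum_congr rfl fun y hy => fiber_card hy, sum_const, nsmul_eq_mul,
    Nat.card_eq_fintype_card, Fintype.card_subtype]
  rfl

lemma coeff_sum_smul_classSum {n : ℕ} {x : Fin n → G} (hdist : ∀ i j, i ≠ j → ¬ IsConj (x i) (x j))
    (b : Fin n → ℚ) (k : Fin n) : (∑ l, b l • classSum G (x l)).coeff (x k) = b k := by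
  rw [coeff_sum, Finsupp.finsetSum_apply, sum_eq_single k]
  · rw [coeff_smul_apply, classSum_coeff, if_pos (IsConj.refl _), smul_eq_mul, mul_one]
  · intro l _ hl
    rw [coeff_smul_apply, classSum_coeff, if_neg (hdist l k hl), smul_eq_mul, mul_zero]
  · simp

lemma coeff_classSum_mul_mul_eq_sum {n : ℕ} {x : Fin n → G}
    (hdist : ∀ i j, i ≠ j → ¬ IsConj (x i) (x j)) {a : Fin n → Fin n → Fin n → ℚ}
    (ha : ∀ i j, classSum G (x i) * classSum G (x j) = ∑ l, a l i j • classSum G (x l))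
    (i j k l : Fin n) :
    (classSum G (x i) * classSum G (x j) * classSum G (x k)).coeff (x l) =
      ∑ m, a m i j * a l m k := by
  rw [ha i j, sum_mul, coeff_sum, Finsupp.finsetSum_apply]
  refine sum_congr rfl fun m _ => ?_
  rw [smul_mul_assoc, ha m k, coeff_smul_apply, coeff_sum_smul_classSum hdist, smul_eq_mul]

end ClassSums

theorem trace_structure_matrices_general (G : Type*) [Group G] [Fintype G] {n : ℕ} (x : Fin n → G)
    (hdist : ∀ i j, i ≠ j → ¬ IsConj (x i) (x j))
    (a : Fin n → Fin n → Fin n → ℚ)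
    (ha : ∀ i j, classSum G (x i) * classSum G (x j) =
      ∑ l : Fin n, a l i j • classSum G (x l))
    (M : Fin n → Matrix (Fin n) (Fin n) ℚ)
    (hM : ∀ j, M j = Matrix.of fun k l => a k l j) :
    ∀ i j, Matrix.trace (M i * M j) =
      ∑ t : Fin n, (1 / (Nat.card {y : G // IsConj (x t) y} : ℚ)) *
        (ellCount G ![x i, x j, x t, (x t)⁻¹] : ℚ) := by
  intro i j
  have class_card_ne_zero (t : Fin n) : (Nat.card {y : G // IsConj (x t) y} : ℚ) ≠ 0 :=
    Nat.cast_ne_zero.2 (Nat.card_ne_zero.2 ⟨⟨⟨x t, IsConj.refl _⟩⟩, inferInstance⟩)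
  calc Matrix.trace (M i * M j)
      = ∑ t, (classSum G (x t) * classSum G (x j) * classSum G (x i)).coeff (x t) := by
        simp only [Matrix.trace, Matrix.diag_apply, Matrix.mul_apply, hM, Matrix.of_apply,
          coeff_classSum_mul_mul_eq_sum hdist ha, mul_comm]
    _ = ∑ t, (classSum G (x i) * classSum G (x j) * classSum G (x t)).coeff (x t) := by
        simp only [classSum_mul_mul_comm (x i)]
    _ = _ := sum_congr rfl fun t _ => by
        rw [ellCount_eq_card_mul_coeff, one_div, inv_mul_cancel_left₀ (class_card_ne_zero t)]

/-- for the structure-constant matrices `Mⱼ = (a_{klj})` of the class algebra,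
`p_{ij} = Tr(MᵢMⱼ) = ∑_t (1/ℓ_t) ℓ_{ijtt'}`. -/
theorem trace_structure_matrices (G : Type*) [Group G] [Fintype G] {n : ℕ} (x : Fin n → G)
    (hdist : ∀ i j, i ≠ j → ¬ IsConj (x i) (x j))
    (hexh : ∀ g : G, ∃ i, IsConj (x i) g)
    (a : Fin n → Fin n → Fin n → ℚ)
    (ha : ∀ i j, classSum G (x i) * classSum G (x j) =
      ∑ l : Fin n, a l i j • classSum G (x l))
    (M : Fin n → Matrix (Fin n) (Fin n) ℚ)
    (hM : ∀ j, M j = Matrix.of fun k l => a k l j) :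
    ∀ i j, Matrix.trace (M i * M j) =
      ∑ t : Fin n, (1 / (Nat.card {y : G // IsConj (x t) y} : ℚ)) *
        (ellCount G ![x i, x j, x t, (x t)⁻¹] : ℚ) :=
  trace_structure_matrices_general G x hdist a ha M hM
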